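/- arXiv:1208.4837 — 2 statements merged into one kernel-verified Lean document; each statement's English description precedes it below -/
import Mathlib

section
/- Let I be the left ideal of R<x,x*> generated by a single (not necessarily homogeneous) polynomial p. Then I is real if and only if there is no polynomial q with deg(q) < deg(p) such that qp + p*q* is a nonzero sum of squares. -/
/-!
If `q p + p* q* = ∑ aᵢ* aᵢ ≠ 0` with `deg q < deg p`, reality puts every `aᵢ` in `R⟨x,x*⟩ p`;
but a nonzero sum of hermitian squares has degree twice the largest `deg aᵢ`, hence at least
`2 deg p`, which exceeds `deg (q p + p* q*)`.

Conversely, let `∑ aᵢ* aᵢ ∈ I + I*`. Dividing by `p` leaves remainders `rᵢ` none of whose words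
ends with a leading word `lam` of `p`, and `σ = ∑ rᵢ* rᵢ`, being hermitian and in `I + I*`, is
`Q p + p* Q*` for some `Q`; argue by induction on `deg Q`. If `deg Q < deg p` the hypothesis
gives `σ = 0`, so all `rᵢ = 0`. If the top-degree parts `γ π` and `π* γ*` of `Q p` and `p* Q*`
cancel, the weak algorithm of the free algebra writes `γ = π* q` with `q + q* = 0`, and
`Q - p* q` is a `Q` of smaller degree. Otherwise the leading forms `ρᵢ` of the `rᵢ` satisfy
`∑ ρᵢ* ρᵢ = γ π + π* γ*`. A linear form `φ` killing `R⟨x,x*⟩ π` induces one that is `φ (ρᵢ) ^ 2`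
on `ρᵢ* ρᵢ` and kills the right-hand side, so `φ (ρᵢ) = 0`; hence every `ρᵢ` lies in
`R⟨x,x*⟩ π`, and then some word of a nonzero `rᵢ` ends with `lam`.
-/

open scoped BigOperators

noncomputable section

/-- The free real *-algebra on `g` variables `x₁,…,x_g` and their formal adjoints
`x₁*,…,x_g*`, modeled as the monoid algebra of the free monoid on `2g` letters,
where `Sum.inl i` is `xᵢ` and `Sum.inr i` is `xᵢ*`. -/
abbrev FreeStarAlg (g : ℕ) := MonoidAlgebra ℝ (FreeMonoid (Fin g ⊕ Fin g))

namespace FreeStarAlg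

variable {g : ℕ}

/-- The involution on words: reverse the word and star each letter. -/
def starWord (w : FreeMonoid (Fin g ⊕ Fin g)) : FreeMonoid (Fin g ⊕ Fin g) :=
  FreeMonoid.ofList (((FreeMonoid.toList w).map Sum.swap).reverse)

/-- The involution `p ↦ p*` on the free *-algebra. -/
def starP (p : FreeStarAlg g) : FreeStarAlg g :=
  MonoidAlgebra.ofCoeff (Finsupp.mapDomain starWord p.coeff)

/-- The monomial corresponding to a word. -/
def mono (w : FreeMonoid (Fin g ⊕ Fin g)) : FreeStarAlg g :=
  MonoidAlgebra.single w 1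

/-- Degree of a noncommutative polynomial. -/
def deg (p : FreeStarAlg g) : ℕ :=
  p.coeff.support.sup fun w => (FreeMonoid.toList w).length

/-- `p` is homogeneous of degree `d`: every word appearing in `p` has length `d`. -/
def IsHom (d : ℕ) (p : FreeStarAlg g) : Prop :=
  ∀ w ∈ p.coeff.support, (FreeMonoid.toList w).length = d

/-- `p` is a (finite) sum of hermitian squares `qᵢ* qᵢ`. -/
def IsSOS (p : FreeStarAlg g) : Prop :=
  ∃ (k : ℕ) (q : Fin k → FreeStarAlg g), p = ∑ i, starP (q i) * q i

/-- Membership in `I + I*`. -/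
def MemIplusIstar (I : Submodule (FreeStarAlg g) (FreeStarAlg g)) (p : FreeStarAlg g) : Prop :=
  ∃ u ∈ I, ∃ v ∈ I, p = u + starP v

/-- A left ideal `I` is real if `∑ aᵢ* aᵢ ∈ I + I*` forces every `aᵢ ∈ I`. -/
def IsRealIdeal (I : Submodule (FreeStarAlg g) (FreeStarAlg g)) : Prop :=
  ∀ (r : ℕ) (a : Fin r → FreeStarAlg g),
    MemIplusIstar I (∑ i, starP (a i) * a i) → ∀ i, a i ∈ I

/-- The left ideal generated by a set `S`. -/
def leftIdealGen (S : Set (FreeStarAlg g)) : Submodule (FreeStarAlg g) (FreeStarAlg g) :=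
  Submodule.span (FreeStarAlg g) S

/-- `p` is irreducible: it cannot be written as a product of two polynomials of
strictly smaller degree. -/
def Irred (p : FreeStarAlg g) : Prop :=
  ¬ ∃ q r : FreeStarAlg g, p = q * r ∧ deg q < deg p ∧ deg r < deg p

/-- `p` is analytic: it contains no starred variables. -/
def IsAnalytic (p : FreeStarAlg g) : Prop :=
  ∀ w ∈ p.coeff.support, ∀ l ∈ FreeMonoid.toList w, l.isLeft

end FreeStarAlg

namespace FreeMonoid

variable {α : Type*}

lemma mul_eq_mul_iff_of_length_eq {x x' y y' : FreeMonoid α} (h : x.length = x'.length) :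
    x * y = x' * y' ↔ x = x' ∧ y = y' := by
  refine ⟨fun hxy => ?_, fun ⟨rfl, rfl⟩ => rfl⟩
  obtain ⟨hx, hy⟩ := List.append_inj (congrArg toList hxy) h
  exact ⟨toList.injective hx, toList.injective hy⟩

lemma mul_eq_mul_iff_of_length_eq_right {x x' y y' : FreeMonoid α} (h : y.length = y'.length) :
    x * y = x' * y' ↔ x = x' ∧ y = y' := by
  refine ⟨fun hxy => (mul_eq_mul_iff_of_length_eq ?_).mp hxy, fun ⟨rfl, rfl⟩ => rfl⟩
  have := congrArg length hxy
  rw [length_mul, length_mul] at this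
  omega

lemma exists_mul_eq_of_le_length {w : FreeMonoid α} {n : ℕ} (h : n ≤ w.length) :
    ∃ x y : FreeMonoid α, x * y = w ∧ x.length = n :=
  ⟨ofList (w.toList.take n), ofList (w.toList.drop n), List.take_append_drop n w.toList,
    List.length_take_of_le h⟩

end FreeMonoid

namespace FreeStarAlg

variable {g : ℕ}

abbrev Word (g : ℕ) := FreeMonoid (Fin g ⊕ Fin g)

open MonoidAlgebra

section Star

@[simp] lemma length_starWord (w : Word g) : (starWord w).length = w.length := by
  simp [starWord, FreeMonoid.length]

lemma starWord_involutive : Function.Involutive (starWord (g := g)) := by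
  intro w
  simp [starWord, List.map_reverse, Sum.swap_swap_eq]

@[simp] lemma starWord_starWord (w : Word g) : starWord (starWord w) = w :=
  starWord_involutive w

lemma starWord_mul (u v : Word g) : starWord (u * v) = starWord v * starWord u := by
  simp [starWord, FreeMonoid.toList_mul]

lemma coeff_starP (f : FreeStarAlg g) (w : Word g) :
    (starP f).coeff w = f.coeff (starWord w) := by
  conv_lhs => rw [← starWord_starWord w]
  exact Finsupp.mapDomain_apply starWord_involutive.injective f.coeff _

@[simp] lemma starP_single (w : Word g) (c : ℝ) : starP (single w c) = single (starWord w) c :=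
  MonoidAlgebra.coeff_injective Finsupp.mapDomain_single

@[simp] lemma starP_add (f h : FreeStarAlg g) : starP (f + h) = starP f + starP h := by
  ext w; simp [coeff_starP]

@[simp] lemma starP_zero : starP (0 : FreeStarAlg g) = 0 := by
  ext w; simp [coeff_starP]

@[simp] lemma starP_sub (f h : FreeStarAlg g) : starP (f - h) = starP f - starP h := by
  ext w; simp [coeff_starP]

@[simp] lemma starP_smul (c : ℝ) (f : FreeStarAlg g) : starP (c • f) = c • starP f := by
  ext w; simp [coeff_starP]

@[simp] lemma starP_starP (f : FreeStarAlg g) : starP (starP f) = f := by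
  ext w; simp [coeff_starP]

@[simp] lemma starP_eq_zero {f : FreeStarAlg g} : starP f = 0 ↔ f = 0 :=
  (Function.LeftInverse.injective starP_starP).eq_iff' starP_zero

lemma starP_sum {ι : Type*} (s : Finset ι) (f : ι → FreeStarAlg g) :
    starP (∑ i ∈ s, f i) = ∑ i ∈ s, starP (f i) :=
  map_sum (AddMonoidHom.mk' starP starP_add) f s

lemma starP_mul (f h : FreeStarAlg g) : starP (f * h) = starP h * starP f := by
  induction f using MonoidAlgebra.induction_linear with
  | zero => simp
  | add a b ha hb => simp [add_mul, mul_add, ha, hb]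
  | single w c =>
    induction h using MonoidAlgebra.induction_linear with
    | zero => simp
    | add a b ha hb => simp [add_mul, mul_add, ha, hb]
    | single w' c' => simp [starWord_mul, mul_comm c]

end Star

section Degree

lemma length_le_deg {f : FreeStarAlg g} {w : Word g} (hw : w ∈ f.coeff.support) :
    w.length ≤ deg f :=
  Finset.le_sup (f := FreeMonoid.length) hw

lemma deg_le_iff {f : FreeStarAlg g} {n : ℕ} :
    deg f ≤ n ↔ ∀ w ∈ f.coeff.support, w.length ≤ n :=
  Finset.sup_le_iff

lemma coeff_eq_zero_of_deg_lt {f : FreeStarAlg g} {w : Word g} (hw : deg f < w.length) :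
    f.coeff w = 0 :=
  Finsupp.notMem_support_iff.mp fun h => (length_le_deg h).not_gt hw

lemma exists_length_eq_deg {f : FreeStarAlg g} (hf : f ≠ 0) :
    ∃ w ∈ f.coeff.support, w.length = deg f := by
  obtain ⟨w, hw, he⟩ := Finset.exists_mem_eq_sup f.coeff.support
    (Finsupp.support_nonempty_iff.mpr (by simpa using hf)) FreeMonoid.length
  exact ⟨w, hw, he.symm⟩

@[simp] lemma deg_zero : deg (0 : FreeStarAlg g) = 0 := by simp [deg]

@[simp] lemma deg_starP (f : FreeStarAlg g) : deg (starP f) = deg f := by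
  have key : ∀ f : FreeStarAlg g, deg (starP f) ≤ deg f := fun f =>
    deg_le_iff.mpr fun w hw => by
      simpa using length_le_deg (w := starWord w)
        (Finsupp.mem_support_iff.mpr (by simpa [coeff_starP] using hw))
  exact le_antisymm (key f) (by simpa using key (starP f))

lemma deg_add_le (f h : FreeStarAlg g) : deg (f + h) ≤ max (deg f) (deg h) := by
  classical
  exact deg_le_iff.mpr fun w hw =>
    (Finset.mem_union.mp (Finsupp.support_add hw)).elim
      (fun h' => le_max_of_le_left (length_le_deg h'))
      (fun h' => le_max_of_le_right (length_le_deg h'))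

@[simp] lemma deg_neg (f : FreeStarAlg g) : deg (-f) = deg f := by
  simp [deg]

lemma deg_sub_le (f h : FreeStarAlg g) : deg (f - h) ≤ max (deg f) (deg h) := by
  simpa [sub_eq_add_neg] using deg_add_le f (-h)

lemma deg_sum_le {ι : Type*} (s : Finset ι) (f : ι → FreeStarAlg g) {n : ℕ}
    (h : ∀ i ∈ s, deg (f i) ≤ n) : deg (∑ i ∈ s, f i) ≤ n := by
  classical
  induction s using Finset.induction with
  | empty => simp
  | insert a s ha ih =>
    rw [Finset.sum_insert ha]
    exact (deg_add_le _ _).trans (max_le (h a (s.mem_insert_self a))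
      (ih fun i hi => h i (Finset.mem_insert_of_mem hi)))

lemma deg_mul_le (f h : FreeStarAlg g) : deg (f * h) ≤ deg f + deg h := by
  classical
  refine deg_le_iff.mpr fun w hw => ?_
  obtain ⟨u, hu, v, hv, rfl⟩ :=
    Finset.mem_mul.mp (MonoidAlgebra.support_coeff_mul_subset f h hw)
  rw [FreeMonoid.length_mul]
  exact add_le_add (length_le_deg hu) (length_le_deg hv)

lemma deg_mul_add_starP_le (q p : FreeStarAlg g) :
    deg (q * p + starP p * starP q) ≤ deg q + deg p :=
  (deg_add_le _ _).trans <| max_le (deg_mul_le q p) <|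
    (deg_mul_le _ _).trans (by rw [deg_starP, deg_starP, add_comm])

lemma coeff_mul_mul_of_deg_le {f h : FreeStarAlg g} {x y : Word g}
    (hf : deg f ≤ x.length) (hh : deg h ≤ y.length) :
    (f * h).coeff (x * y) = f.coeff x * h.coeff y := by
  classical
  rw [MonoidAlgebra.coeff_mul, Finsupp.sum_eq_single x, Finsupp.sum_eq_single y, if_pos rfl]
  · intro v _ hv
    rw [if_neg]
    exact fun h' => hv ((FreeMonoid.mul_eq_mul_iff_of_length_eq rfl).mp h').2
  · simp
  · intro u hu hux
    refine Finset.sum_eq_zero fun v hv => if_neg fun huv => hux ?_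
    have hlen := congrArg FreeMonoid.length huv
    simp only [FreeMonoid.length_mul] at hlen
    have := length_le_deg (Finsupp.mem_support_iff.mpr hu)
    have := length_le_deg hv
    exact ((FreeMonoid.mul_eq_mul_iff_of_length_eq (by omega)).mp huv).1
  · simp

end Degree

section Homogeneous

lemma isHom_iff {d : ℕ} {f : FreeStarAlg g} :
    IsHom d f ↔ ∀ w ∈ f.coeff.support, w.length = d := Iff.rfl

lemma IsHom.deg_le {d : ℕ} {f : FreeStarAlg g} (hf : IsHom d f) : deg f ≤ d :=
  deg_le_iff.mpr fun w hw => (hf w hw).le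

lemma IsHom.starP {d : ℕ} {f : FreeStarAlg g} (hf : IsHom d f) : IsHom d (starP f) := by
  rw [isHom_iff] at hf ⊢
  intro w hw
  simpa using hf (starWord w) (Finsupp.mem_support_iff.mpr (by simpa [coeff_starP] using hw))

lemma IsHom.mul {a b : ℕ} {f h : FreeStarAlg g} (hf : IsHom a f) (hh : IsHom b h) :
    IsHom (a + b) (f * h) := by
  classical
  rw [isHom_iff] at hf hh ⊢
  intro w hw
  obtain ⟨u, hu, v, hv, rfl⟩ :=
    Finset.mem_mul.mp (MonoidAlgebra.support_coeff_mul_subset f h hw)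
  exact (FreeMonoid.length_mul u v).trans (by rw [hf u hu, hh v hv])

lemma IsHom.eq_single_one {f : FreeStarAlg g} (hf : IsHom 0 f) : f = single 1 (f.coeff 1) := by
  ext w
  by_cases hw : w = 1
  · simp [hw]
  · rw [coeff_single, Finsupp.single_eq_of_ne' (Ne.symm hw)]
    by_contra hne
    exact hw (FreeMonoid.length_eq_zero.mp (hf w (Finsupp.mem_support_iff.mpr hne)))

open Classical in
def homogeneousComponent (n : ℕ) : FreeStarAlg g →ₗ[ℝ] FreeStarAlg g where
  toFun f := ofCoeff (f.coeff.filter fun w => w.length = n)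
  map_add' f h := by ext w; simp only [coeff_add, Finsupp.filter_add]
  map_smul' c f := by ext w; simp only [coeff_smul, Finsupp.filter_smul, RingHom.id_apply]

lemma coeff_homogeneousComponent (n : ℕ) (f : FreeStarAlg g) (w : Word g) :
    (homogeneousComponent n f).coeff w = if w.length = n then f.coeff w else 0 := by
  classical
  exact Finsupp.filter_apply _ _ _

lemma isHom_homogeneousComponent (n : ℕ) (f : FreeStarAlg g) :
    IsHom n (homogeneousComponent n f) := by
  rw [isHom_iff]
  intro w hw
  by_contra h
  simp [coeff_homogeneousComponent, h] at hw

lemma homogeneousComponent_of_isHom {n : ℕ} {f : FreeStarAlg g} (hf : IsHom n f) :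
    homogeneousComponent n f = f := by
  ext w
  rw [coeff_homogeneousComponent]
  split_ifs with h
  · rfl
  · exact (Finsupp.notMem_support_iff.mp fun hw => h (hf w hw)).symm

lemma homogeneousComponent_eq_zero_of_deg_lt {n : ℕ} {f : FreeStarAlg g} (h : deg f < n) :
    homogeneousComponent n f = 0 := by
  ext w
  rw [coeff_homogeneousComponent]
  split_ifs with hw
  · exact coeff_eq_zero_of_deg_lt (hw ▸ h)
  · rfl

lemma le_deg_of_homogeneousComponent_ne_zero {n : ℕ} {f : FreeStarAlg g}
    (h : homogeneousComponent n f ≠ 0) : n ≤ deg f :=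
  not_lt.mp (mt homogeneousComponent_eq_zero_of_deg_lt h)

lemma homogeneousComponent_deg_ne_zero {f : FreeStarAlg g} (hf : f ≠ 0) :
    homogeneousComponent (deg f) f ≠ 0 := by
  obtain ⟨w, hw, hlen⟩ := exists_length_eq_deg hf
  intro h
  have := coeff_homogeneousComponent (deg f) f w
  rw [h, if_pos hlen] at this
  exact Finsupp.mem_support_iff.mp hw this.symm

lemma homogeneousComponent_starP (n : ℕ) (f : FreeStarAlg g) :
    homogeneousComponent n (starP f) = starP (homogeneousComponent n f) := by
  ext w
  simp [coeff_homogeneousComponent, coeff_starP]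

lemma homogeneousComponent_mul {a b : ℕ} {f h : FreeStarAlg g} (hf : deg f ≤ a)
    (hh : deg h ≤ b) :
    homogeneousComponent (a + b) (f * h) = homogeneousComponent a f * homogeneousComponent b h := by
  ext m
  rw [coeff_homogeneousComponent]
  split_ifs with hm
  · obtain ⟨x, y, rfl, hx⟩ :=
      FreeMonoid.exists_mul_eq_of_le_length (hm ▸ Nat.le_add_right a b)
    have hy : y.length = b := by rw [FreeMonoid.length_mul] at hm; omega
    rw [coeff_mul_mul_of_deg_le (hx ▸ hf) (hy ▸ hh), coeff_mul_mul_of_deg_le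
      (hx ▸ (isHom_homogeneousComponent a f).deg_le)
      (hy ▸ (isHom_homogeneousComponent b h).deg_le),
      coeff_homogeneousComponent, coeff_homogeneousComponent, if_pos hx, if_pos hy]
  · exact (Finsupp.notMem_support_iff.mp fun hw => hm (((isHom_homogeneousComponent a f).mul
      (isHom_homogeneousComponent b h)) m hw)).symm

lemma deg_mul {f h : FreeStarAlg g} (hf : f ≠ 0) (hh : h ≠ 0) :
    deg (f * h) = deg f + deg h := by
  refine le_antisymm (deg_mul_le f h) (le_deg_of_homogeneousComponent_ne_zero ?_)
  rw [homogeneousComponent_mul le_rfl le_rfl]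
  exact mul_ne_zero (homogeneousComponent_deg_ne_zero hf) (homogeneousComponent_deg_ne_zero hh)

lemma IsHom.deg_eq {d : ℕ} {f : FreeStarAlg g} (hf : IsHom d f) (h0 : f ≠ 0) : deg f = d := by
  obtain ⟨w, hw, hlen⟩ := exists_length_eq_deg h0
  exact hlen.symm.trans (hf w hw)

lemma deg_lt_of_homogeneousComponent_eq_zero {n : ℕ} {f : FreeStarAlg g} (hn : 0 < n)
    (hle : deg f ≤ n) (h0 : homogeneousComponent n f = 0) : deg f < n := by
  refine hle.lt_of_ne fun heq => ?_
  have hf : f ≠ 0 := by rintro rfl; simp at heq; omega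
  exact homogeneousComponent_deg_ne_zero hf (heq ▸ h0)

lemma homogeneousComponent_mul_add_starP {d e : ℕ} {p Q : FreeStarAlg g} (hp : deg p ≤ d)
    (hQ : deg Q ≤ e) :
    homogeneousComponent (e + d) (Q * p + starP p * starP Q) =
      homogeneousComponent e Q * homogeneousComponent d p +
        starP (homogeneousComponent d p) * starP (homogeneousComponent e Q) := by
  rw [map_add, homogeneousComponent_mul hQ hp, add_comm e d,
    homogeneousComponent_mul (by rwa [deg_starP]) (by rwa [deg_starP]),
    homogeneousComponent_starP, homogeneousComponent_starP]

end Homogeneous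

section HermitianSquares

variable {ι : Type*} [Fintype ι] (r : ι → FreeStarAlg g)

lemma coeff_sum_starP_mul_self {w : Word g} (hr : ∀ i, deg (r i) ≤ w.length) :
    (∑ i, starP (r i) * r i).coeff (starWord w * w) = ∑ i, (r i).coeff w ^ 2 := by
  simp only [coeff_sum, Finset.sum_apply']
  refine Finset.sum_congr rfl fun i _ => ?_
  rw [coeff_mul_mul_of_deg_le (by simpa using hr i) (hr i), coeff_starP, starWord_starWord, sq]

variable {r}

lemma exists_starWord_mul_mem_support_sum_starP_mul_self {j : ι} (hj : r j ≠ 0)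
    (hmax : ∀ i, deg (r i) ≤ deg (r j)) :
    ∃ w : Word g, w.length = deg (r j) ∧
      starWord w * w ∈ (∑ i, starP (r i) * r i).coeff.support := by
  obtain ⟨w, hw, hlen⟩ := exists_length_eq_deg hj
  refine ⟨w, hlen, Finsupp.mem_support_iff.mpr ?_⟩
  rw [coeff_sum_starP_mul_self r (hlen ▸ hmax)]
  exact (Finset.sum_pos' (fun i _ => sq_nonneg _)
    ⟨j, Finset.mem_univ _, by have := Finsupp.mem_support_iff.mp hw; positivity⟩).ne'

lemma exists_deg_le_of_ne_zero (h : ∃ i, r i ≠ 0) :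
    ∃ j, r j ≠ 0 ∧ ∀ i, deg (r i) ≤ deg (r j) := by
  classical
  obtain ⟨j, hj, hmax⟩ := Finset.exists_max_image {i | r i ≠ 0} (deg ∘ r)
    (by simpa [Finset.Nonempty] using h)
  refine ⟨j, (Finset.mem_filter.mp hj).2, fun i => ?_⟩
  by_cases hi : r i = 0
  · simp [hi]
  · exact hmax i (by simpa using hi)

lemma sum_starP_mul_self_eq_zero_iff : ∑ i, starP (r i) * r i = 0 ↔ ∀ i, r i = 0 := by
  refine ⟨fun h => ?_, fun h => by simp [h]⟩
  by_contra! hr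
  obtain ⟨j, hj, hmax⟩ := exists_deg_le_of_ne_zero hr
  obtain ⟨w, -, hw⟩ := exists_starWord_mul_mem_support_sum_starP_mul_self hj hmax
  simp [h] at hw

lemma deg_sum_starP_mul_self {j : ι} (hmax : ∀ i, deg (r i) ≤ deg (r j)) :
    deg (∑ i, starP (r i) * r i) = 2 * deg (r j) := by
  refine le_antisymm (deg_sum_le _ _ fun i _ => ?_) ?_
  · exact (deg_mul_le _ _).trans (by rw [deg_starP]; have := hmax i; omega)
  · by_cases hj : r j = 0
    · simp [hj]
    obtain ⟨w, hlen, hw⟩ := exists_starWord_mul_mem_support_sum_starP_mul_self hj hmax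
    have := length_le_deg hw
    rw [FreeMonoid.length_mul, length_starWord, hlen] at this
    omega

lemma homogeneousComponent_sum_starP_mul_self {D : ℕ} (hr : ∀ i, deg (r i) ≤ D) :
    homogeneousComponent (D + D) (∑ i, starP (r i) * r i) =
      ∑ i, starP (homogeneousComponent D (r i)) * homogeneousComponent D (r i) := by
  simp only [map_sum, ← homogeneousComponent_starP]
  exact Finset.sum_congr rfl fun i _ => homogeneousComponent_mul (by simpa using hr i) (hr i)

end HermitianSquares

section Ideals

lemma mem_leftIdealGen_singleton {p f : FreeStarAlg g} :
    f ∈ leftIdealGen {p} ↔ ∃ c, f = c * p := by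
  simp only [leftIdealGen, Submodule.mem_span_singleton, smul_eq_mul, eq_comm]

lemma memIplusIstar_sum_starP_mul_self_of_sub_mem {I : Submodule (FreeStarAlg g) (FreeStarAlg g)}
    {ι : Type*} [Fintype ι] {a r : ι → FreeStarAlg g} (har : ∀ i, a i - r i ∈ I)
    (h : MemIplusIstar I (∑ i, starP (a i) * a i)) :
    MemIplusIstar I (∑ i, starP (r i) * r i) := by
  obtain ⟨u, hu, v, hv, huv⟩ := h
  set e := fun i => a i - r i
  have expand : ∀ i, starP (a i) * a i = starP (r i) * r i
      + (starP (e i) * e i + starP (r i) * e i) + starP (starP (r i) * e i) := by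
    intro i
    rw [starP_mul, starP_starP, show a i = e i + r i from (sub_add_cancel _ _).symm, starP_add]
    noncomm_ring
  refine ⟨u - ∑ i, (starP (e i) * e i + starP (r i) * e i),
    I.sub_mem hu (I.sum_mem fun i _ => I.add_mem (I.smul_mem _ (har i)) (I.smul_mem _ (har i))),
    v - ∑ i, starP (r i) * e i, I.sub_mem hv (I.sum_mem fun i _ => I.smul_mem _ (har i)), ?_⟩
  simp only [Finset.sum_congr rfl fun i _ => expand i, Finset.sum_add_distrib] at huv
  rw [starP_sub, starP_sum, Finset.sum_add_distrib,
    eq_sub_of_add_eq ((add_assoc _ _ _).symm.trans huv)]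
  abel

lemma exists_eq_add_starP_of_memIplusIstar {I : Submodule (FreeStarAlg g) (FreeStarAlg g)}
    {σ : FreeStarAlg g} (hσ : starP σ = σ) (h : MemIplusIstar I σ) :
    ∃ u ∈ I, σ = u + starP u := by
  obtain ⟨u, hu, v, hv, rfl⟩ := h
  refine ⟨(2⁻¹ : ℝ) • (u + v), I.smul_of_tower_mem _ (I.add_mem hu hv), ?_⟩
  have hσ' : u + starP v = starP u + v := by simpa [add_comm] using hσ.symm
  rw [starP_smul, ← smul_add, starP_add,
    show u + v + (starP u + starP v) = (2 : ℝ) • (u + starP v) by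
      rw [two_smul]; nth_rewrite 2 [hσ']; abel,
    smul_smul, inv_mul_cancel₀ two_ne_zero, one_smul]

end Ideals

lemma mul_add_starP_eq_zero_of_isRealIdeal {p q : FreeStarAlg g}
    (hI : IsRealIdeal (leftIdealGen {p})) (hq : deg q < deg p)
    (hsos : IsSOS (q * p + starP p * starP q)) : q * p + starP p * starP q = 0 := by
  obtain ⟨k, a, ha⟩ := hsos
  have hmem : ∀ i, a i ∈ leftIdealGen {p} := by
    have hqp : q * p ∈ leftIdealGen {p} := mem_leftIdealGen_singleton.mpr ⟨q, rfl⟩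
    exact hI k a (ha ▸ ⟨q * p, hqp, q * p, hqp, by rw [starP_mul]⟩)
  rw [ha, sum_starP_mul_self_eq_zero_iff]
  by_contra! ha0
  obtain ⟨j, hj, hmax⟩ := exists_deg_le_of_ne_zero ha0
  obtain ⟨c, hc⟩ := mem_leftIdealGen_singleton.mp (hmem j)
  have hc0 : c ≠ 0 := by rintro rfl; exact hj (by simp [hc])
  have hp0 : p ≠ 0 := by rintro rfl; exact hj (by simp [hc])
  have hdeg := deg_mul_add_starP_le q p
  rw [ha, deg_sum_starP_mul_self hmax, hc, deg_mul hc0 hp0] at hdeg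
  omega

section Reduction

lemma single_mul_eq_sum (u : Word g) (p : FreeStarAlg g) :
    single u 1 * p = ∑ v ∈ p.coeff.support, single (u * v) (p.coeff v) := by
  conv_lhs => rw [← sum_coeff_single p]
  simp only [Finsupp.sum, Finset.mul_sum, single_mul_single, one_mul]

abbrev reduced (lam : Word g) : Submodule ℝ (FreeStarAlg g) :=
  supported ℝ ℝ (Set.range (· * lam))ᶜ

lemma single_mem_sup_reduced {p : FreeStarAlg g} {lam : Word g} (hlam : p.coeff lam ≠ 0)
    (hlen : deg p ≤ lam.length) (w : Word g) :
    single w 1 ∈ (leftIdealGen {p}).restrictScalars ℝ ⊔ reduced lam := by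
  classical
  set S := (leftIdealGen {p}).restrictScalars ℝ ⊔ reduced lam
  induction hn : w.length using Nat.strong_induction_on generalizing w with
  | _ n ih =>
  by_cases hw : w ∈ Set.range (· * lam)
  swap
  · exact Submodule.mem_sup_right (by simpa [mem_supported] using hw)
  obtain ⟨u, rfl⟩ := hw
  have hsplit : single (u * lam) (p.coeff lam) = single u 1 * p
      - ∑ v ∈ p.coeff.support.erase lam, p.coeff v • single (u * v) 1 := by
    rw [single_mul_eq_sum, ← Finset.add_sum_erase _ _ (Finsupp.mem_support_iff.mpr hlam)]
    simp
  -- The other words `u v` of `single u 1 * p` are shorter than `u lam`, or do not end in `lam`.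
  have hterm : ∀ v ∈ p.coeff.support.erase lam, single (u * v) 1 ∈ S := by
    intro v hv
    obtain ⟨hvlam, hv⟩ := Finset.mem_erase.mp hv
    rcases ((length_le_deg hv).trans hlen).lt_or_eq with hlt | heq
    · exact ih _ (by rw [← hn, FreeMonoid.length_mul, FreeMonoid.length_mul]; omega) _ rfl
    · refine Submodule.mem_sup_right ?_
      suffices ∀ y, y * lam ≠ u * v by simpa [mem_supported] using this
      exact fun y hy =>
        hvlam ((FreeMonoid.mul_eq_mul_iff_of_length_eq_right heq.symm).mp hy).2.symm
  have hmem : single (u * lam) (p.coeff lam) ∈ S := by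
    rw [hsplit]
    refine S.sub_mem (Submodule.mem_sup_left ?_) (S.sum_mem fun v hv => S.smul_mem _ (hterm v hv))
    exact mem_leftIdealGen_singleton.mpr ⟨_, rfl⟩
  simpa [smul_single', hlam] using S.smul_mem (p.coeff lam)⁻¹ hmem

lemma exists_eq_mul_add_mem_reduced {p : FreeStarAlg g} {lam : Word g}
    (hlam : p.coeff lam ≠ 0) (hlen : deg p ≤ lam.length) (f : FreeStarAlg g) :
    ∃ c, ∃ r ∈ reduced lam, f = c * p + r := by
  have htop : ⊤ ≤ (leftIdealGen {p}).restrictScalars ℝ ⊔ reduced lam := by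
    rw [← (MonoidAlgebra.basis (Word g) ℝ).span_eq, Submodule.span_le]
    rintro _ ⟨w, rfl⟩
    exact single_mem_sup_reduced hlam hlen w
  obtain ⟨y, hy, r, hr, rfl⟩ := Submodule.mem_sup.mp (htop trivial : f ∈ _)
  obtain ⟨c, rfl⟩ := mem_leftIdealGen_singleton.mp hy
  exact ⟨c, r, hr, rfl⟩

end Reduction

section LeftDeriv

def leftDeriv (ℓ : Fin g ⊕ Fin g) : FreeStarAlg g →ₗ[ℝ] FreeStarAlg g where
  toFun f := ofCoeff (f.coeff.comapDomain (FreeMonoid.of ℓ * ·)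
    (mul_right_injective (FreeMonoid.of ℓ)).injOn)
  map_add' f h := by ext w; simp
  map_smul' c f := by ext w; simp

lemma coeff_leftDeriv (ℓ : Fin g ⊕ Fin g) (f : FreeStarAlg g) (w : Word g) :
    (leftDeriv ℓ f).coeff w = f.coeff (FreeMonoid.of ℓ * w) := rfl

lemma coeff_single_of_mul_of_mul (ℓ ℓ' : Fin g ⊕ Fin g) (y : FreeStarAlg g) (w : Word g) :
    (single (FreeMonoid.of ℓ) 1 * y).coeff (FreeMonoid.of ℓ' * w) =
      if ℓ = ℓ' then y.coeff w else 0 := by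
  split_ifs with h
  · subst h
    rw [coeff_single_mul_eq_mul_coeff w (fun _ _ => mul_right_injective _ |>.eq_iff), one_mul]
  · exact coeff_single_mul_of_forall_mul_ne _ _ fun v hv =>
      h (FreeMonoid.of_injective
        ((FreeMonoid.mul_eq_mul_iff_of_length_eq (by rfl)).mp hv).1)

lemma sum_single_mul_leftDeriv {f : FreeStarAlg g} (hf : f.coeff 1 = 0) :
    ∑ ℓ, single (FreeMonoid.of ℓ) 1 * leftDeriv ℓ f = f := by
  ext w
  rw [coeff_sum, Finset.sum_apply']
  induction w using FreeMonoid.casesOn with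
  | one =>
    rw [hf]
    refine Finset.sum_eq_zero fun ℓ _ => coeff_single_mul_of_forall_mul_ne _ _ fun v hv => ?_
    exact FreeMonoid.of_ne_one ℓ (FreeMonoid.length_eq_zero.mp (by
      simpa [FreeMonoid.length_mul, FreeMonoid.length_of] using congrArg FreeMonoid.length hv))
  | of_mul ℓ' w =>
    simp [coeff_single_of_mul_of_mul, coeff_leftDeriv]

lemma leftDeriv_single_of_mul (ℓ ℓ' : Fin g ⊕ Fin g) (y : FreeStarAlg g) :
    leftDeriv ℓ (single (FreeMonoid.of ℓ') 1 * y) = if ℓ' = ℓ then y else 0 := by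
  ext w
  rw [coeff_leftDeriv, coeff_single_of_mul_of_mul]
  split_ifs <;> rfl

lemma leftDeriv_mul {f : FreeStarAlg g} (hf : f.coeff 1 = 0) (ℓ : Fin g ⊕ Fin g)
    (x : FreeStarAlg g) : leftDeriv ℓ (f * x) = leftDeriv ℓ f * x := by
  conv_lhs => rw [← sum_single_mul_leftDeriv hf]
  simp only [Finset.sum_mul, map_sum, mul_assoc, leftDeriv_single_of_mul, Finset.sum_ite_eq',
    Finset.mem_univ, if_true]

lemma IsHom.leftDeriv {n : ℕ} {f : FreeStarAlg g} (hf : IsHom (n + 1) f) (ℓ : Fin g ⊕ Fin g) :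
    IsHom n (leftDeriv ℓ f) := by
  rw [isHom_iff] at hf ⊢
  intro w hw
  have := hf _ (by simpa [coeff_leftDeriv] using hw)
  rw [FreeMonoid.length_mul, FreeMonoid.length_of] at this
  omega

lemma le_length_of_mem_support_leftDeriv {n : ℕ} {f : FreeStarAlg g}
    (hf : ∀ w ∈ f.coeff.support, n + 1 ≤ w.length) (ℓ : Fin g ⊕ Fin g) :
    ∀ w ∈ (leftDeriv ℓ f).coeff.support, n ≤ w.length := by
  intro w hw
  have := hf _ (by simpa [coeff_leftDeriv] using hw)
  rw [FreeMonoid.length_mul, FreeMonoid.length_of] at this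
  omega

lemma coeff_one_eq_zero_of_le_length {n : ℕ} {f : FreeStarAlg g}
    (hf : ∀ w ∈ f.coeff.support, n + 1 ≤ w.length) : f.coeff 1 = 0 :=
  Finsupp.notMem_support_iff.mp fun h => by simpa using hf 1 h

lemma exists_eq_mul_of_mul_eq_mul {n : ℕ} {a b B C : FreeStarAlg g} (hC : IsHom n C)
    (hC0 : C ≠ 0) (hB0 : B ≠ 0) (ha : ∀ w ∈ a.coeff.support, n ≤ w.length)
    (h : a * B = C * b) : ∃ q, a = C * q := by
  -- Strip the first letter; the quotient found for one letter serves for all, as `B` cancels.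
  induction n generalizing a b C with
  | zero =>
    have hc : C.coeff 1 ≠ 0 := fun h0 => hC0 (by rw [hC.eq_single_one, h0, single_zero])
    refine ⟨(C.coeff 1)⁻¹ • a, ?_⟩
    ext w
    rw [hC.eq_single_one, coeff_single_one_mul, coeff_smul, Finsupp.smul_apply, smul_eq_mul,
      coeff_single, Finsupp.single_eq_same, mul_inv_cancel_left₀ hc]
  | succ n ih =>
    have ha1 : a.coeff 1 = 0 := coeff_one_eq_zero_of_le_length ha
    have hC1 : C.coeff 1 = 0 := coeff_one_eq_zero_of_le_length fun w hw => (hC w hw).ge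
    have hderiv : ∀ ℓ, leftDeriv ℓ a * B = leftDeriv ℓ C * b := fun ℓ => by
      rw [← leftDeriv_mul ha1, ← leftDeriv_mul hC1, h]
    obtain ⟨ℓ₀, hℓ₀⟩ : ∃ ℓ, leftDeriv ℓ C ≠ 0 := by
      by_contra! h0
      refine hC0 ?_
      rw [← sum_single_mul_leftDeriv hC1]
      simp [h0]
    obtain ⟨q, hq⟩ :=
      ih (hC.leftDeriv ℓ₀) hℓ₀ (le_length_of_mem_support_leftDeriv ha ℓ₀) (hderiv ℓ₀)
    have hb : b = q * B := mul_left_cancel₀ hℓ₀ (by rw [← hderiv, hq, mul_assoc])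
    have hall : ∀ ℓ, leftDeriv ℓ a = leftDeriv ℓ C * q := fun ℓ =>
      mul_right_cancel₀ hB0 (by rw [hderiv, hb, mul_assoc])
    refine ⟨q, ?_⟩
    rw [← sum_single_mul_leftDeriv ha1, ← sum_single_mul_leftDeriv hC1, Finset.sum_mul]
    simp only [hall, mul_assoc]

end LeftDeriv

section Descent

lemma exists_eq_starP_mul_of_mul_add_starP_eq_zero {d e : ℕ} {π γ : FreeStarAlg g}
    (hπ : IsHom d π) (hπ0 : π ≠ 0) (hγ : IsHom e γ) (hde : d ≤ e)
    (h : γ * π + starP π * starP γ = 0) :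
    ∃ q, IsHom (e - d) q ∧ γ = starP π * q ∧ q + starP q = 0 := by
  have hπ0' : starP π ≠ 0 := starP_eq_zero.not.mpr hπ0
  obtain ⟨q₀, hq₀⟩ := exists_eq_mul_of_mul_eq_mul hπ.starP hπ0' hπ0
    (fun w hw => hde.trans (hγ w hw).ge) (by rw [mul_neg, eq_neg_of_add_eq_zero_left h])
  have hdeg : deg q₀ ≤ e - d := by
    by_cases hq₀0 : q₀ = 0
    · simp [hq₀0]
    have := hγ.deg_le
    rw [hq₀, deg_mul hπ0' hq₀0, hπ.starP.deg_eq hπ0'] at this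
    omega
  have hγq : γ = starP π * homogeneousComponent (e - d) q₀ := by
    have htop := homogeneousComponent_mul hπ.starP.deg_le hdeg
    rw [Nat.add_sub_cancel' hde, homogeneousComponent_of_isHom hπ.starP] at htop
    rw [← homogeneousComponent_of_isHom hγ, hq₀, htop]
  refine ⟨_, isHom_homogeneousComponent _ _, hγq, ?_⟩
  have hsq : starP π * ((homogeneousComponent (e - d) q₀ +
      starP (homogeneousComponent (e - d) q₀)) * π) = 0 := by
    rw [← h, hγq, starP_mul, starP_starP]
    noncomm_ring
  simpa [hπ0, hπ0'] using hsq

lemma exists_deg_lt_of_deg_mul_add_starP_lt {p Q : FreeStarAlg g} (hp : p ≠ 0)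
    (hpQ : deg p ≤ deg Q) (hlt : deg (Q * p + starP p * starP Q) < deg Q + deg p) :
    ∃ Q', Q' * p + starP p * starP Q' = Q * p + starP p * starP Q ∧ deg Q' < deg Q := by
  set π := homogeneousComponent (deg p) p
  set γ := homogeneousComponent (deg Q) Q
  have htop : γ * π + starP π * starP γ = 0 := by
    rw [← homogeneousComponent_mul_add_starP le_rfl le_rfl]
    exact homogeneousComponent_eq_zero_of_deg_lt hlt
  obtain ⟨q, hqhom, hγ, hq⟩ := exists_eq_starP_mul_of_mul_add_starP_eq_zero
    (isHom_homogeneousComponent _ _) (homogeneousComponent_deg_ne_zero hp)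
    (isHom_homogeneousComponent _ _) hpQ htop
  refine ⟨Q - starP p * q, ?_, ?_⟩
  · calc (Q - starP p * q) * p + starP p * starP (Q - starP p * q)
        = Q * p + starP p * starP Q - starP p * ((q + starP q) * p) := by
          rw [starP_sub, starP_mul, starP_starP]; noncomm_ring
      _ = Q * p + starP p * starP Q := by rw [hq]; simp
  · have hdeg : deg (starP p * q) ≤ deg p + (deg Q - deg p) :=
      (deg_mul_le _ _).trans (by rw [deg_starP]; exact add_le_add_right hqhom.deg_le _)
    refine deg_lt_of_homogeneousComponent_eq_zero (by omega) ?_ ?_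
    · exact (deg_sub_le _ _).trans (max_le le_rfl (by omega))
    · have hcorr : homogeneousComponent (deg Q) (starP p * q) = γ := by
        rw [show γ = _ from hγ, show deg Q = deg p + (deg Q - deg p) by omega,
          homogeneousComponent_mul (deg_starP p).le hqhom.deg_le, homogeneousComponent_starP,
          homogeneousComponent_of_isHom hqhom]
      rw [map_sub, hcorr, sub_self]

end Descent

section Pairing

lemma eq_sum_single (f : FreeStarAlg g) : f = ∑ w ∈ f.coeff.support, single w (f.coeff w) :=
  (sum_coeff_single f).symm

lemma single_eq_smul_mono (w : Word g) (c : ℝ) : single w c = c • mono w := by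
  rw [mono, smul_single', mul_one]

lemma dual_apply_eq_sum (ψ : Module.Dual ℝ (FreeStarAlg g)) (f : FreeStarAlg g) :
    ψ f = ∑ w ∈ f.coeff.support, f.coeff w * ψ (mono w) := by
  conv_lhs => rw [eq_sum_single f]
  simp only [map_sum, single_eq_smul_mono, map_smul, smul_eq_mul]

variable (φ : Module.Dual ℝ (FreeStarAlg g)) (D : ℕ)

def pairing : Module.Dual ℝ (FreeStarAlg g) :=
  (MonoidAlgebra.basis (Word g) ℝ).constr ℝ fun m =>
    φ (mono (starWord (FreeMonoid.ofList (m.toList.take D)))) *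
      φ (mono (FreeMonoid.ofList (m.toList.drop D)))

variable {φ D}

lemma pairing_single_mul_eq {x : Word g} (hx : x.length = D) (y : Word g) (c : ℝ) :
    pairing φ D (single (x * y) c) = c * φ (mono (starWord x)) * φ (mono y) := by
  rw [single_eq_smul_mono, map_smul, smul_eq_mul, mul_assoc, mono, ← basis_apply, pairing,
    Module.Basis.constr_basis, FreeMonoid.toList_mul, List.take_left' hx, List.drop_left' hx]
  rfl

lemma pairing_single_mul {x : Word g} (hx : x.length = D) (c : ℝ) (f : FreeStarAlg g) :
    pairing φ D (single x c * f) = c * φ (mono (starWord x)) * φ f := by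
  induction f using MonoidAlgebra.induction_linear with
  | zero => simp
  | add f h hf hh => simp [mul_add, hf, hh]
  | single y d =>
    rw [single_mul_single, pairing_single_mul_eq hx, single_eq_smul_mono y, map_smul,
      smul_eq_mul]
    ring

lemma pairing_starP_mul_self {b : FreeStarAlg g} (hb : IsHom D b) :
    pairing φ D (starP b * b) = φ b ^ 2 := by
  have hstar : starP b = ∑ w ∈ b.coeff.support, single (starWord w) (b.coeff w) := by
    conv_lhs => rw [eq_sum_single b]
    simp [starP_sum]
  rw [hstar, Finset.sum_mul, map_sum, Finset.sum_congr rfl fun w hw => pairing_single_mul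
    ((length_starWord w).trans (hb w hw)) _ b,
    dual_apply_eq_sum φ b, sq, Finset.sum_mul]
  simp only [starWord_starWord]

lemma pairing_mul_eq_zero {γ π : FreeStarAlg g} (hφ : ∀ c, φ (c * π) = 0)
    (hγ : ∀ w ∈ γ.coeff.support, D ≤ w.length) : pairing φ D (γ * π) = 0 := by
  rw [eq_sum_single γ, Finset.sum_mul, map_sum]
  refine Finset.sum_eq_zero fun w hw => ?_
  obtain ⟨x, y, rfl, hx⟩ := FreeMonoid.exists_mul_eq_of_le_length (hγ w hw)
  rw [← mul_one (γ.coeff _), ← single_mul_single, mul_assoc, pairing_single_mul hx, hφ,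
    mul_zero]

lemma pairing_starP {f : FreeStarAlg g} (hf : IsHom (D + D) f) :
    pairing φ D (starP f) = pairing φ D f := by
  conv_lhs => rw [eq_sum_single f, starP_sum, map_sum]
  conv_rhs => rw [eq_sum_single f, map_sum]
  refine Finset.sum_congr rfl fun w hw => ?_
  obtain ⟨x, y, rfl, hx⟩ := FreeMonoid.exists_mul_eq_of_le_length
    ((Nat.le_add_right D D).trans (hf w hw).ge)
  have hy : y.length = D := by
    have := isHom_iff.mp hf _ hw
    rw [FreeMonoid.length_mul] at this
    omega
  rw [starP_single, starWord_mul, pairing_single_mul_eq ((length_starWord y).trans hy),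
    pairing_single_mul_eq hx, starWord_starWord]
  ring

end Pairing

lemma mem_leftIdealGen_of_sum_starP_mul_self_eq {ι : Type*} [Fintype ι] {b : ι → FreeStarAlg g}
    {π γ : FreeStarAlg g} {d e D : ℕ} (hb : ∀ i, IsHom D (b i)) (hπ : IsHom d π)
    (hγ : IsHom e γ) (hdD : d ≤ D) (hde : e + d = D + D)
    (h : ∑ i, starP (b i) * b i = γ * π + starP π * starP γ) (i : ι) :
    b i ∈ leftIdealGen {π} := by
  by_contra hi
  obtain ⟨φ, hφi, hφ⟩ := Submodule.exists_dual_map_eq_bot_of_notMem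
    (p := (leftIdealGen {π}).restrictScalars ℝ) hi inferInstance
  have hφπ : ∀ c, φ (c * π) = 0 := fun c => by
    simpa [hφ] using Submodule.mem_map_of_mem (f := φ)
      (p := (leftIdealGen {π}).restrictScalars ℝ) (mem_leftIdealGen_singleton.mpr ⟨c, rfl⟩)
  have hsum : ∑ j, φ (b j) ^ 2 = 0 :=
    calc ∑ j, φ (b j) ^ 2 = pairing φ D (∑ j, starP (b j) * b j) := by
          simp [map_sum, pairing_starP_mul_self (hb _)]
      _ = pairing φ D (γ * π) + pairing φ D (starP (γ * π)) := by rw [h, map_add, starP_mul]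
      _ = 0 := by
          rw [pairing_starP (hde ▸ hγ.mul hπ),
            pairing_mul_eq_zero hφπ fun w hw => (by omega : D ≤ e).trans (hγ w hw).ge,
            add_zero]
  exact hφi (pow_eq_zero_iff two_ne_zero |>.mp
    ((Finset.sum_eq_zero_iff_of_nonneg fun j _ => sq_nonneg _).mp hsum i (Finset.mem_univ _)))

lemma exists_coeff_mul_mul_ne_zero {c π : FreeStarAlg g} {lam : Word g} (hc : c ≠ 0)
    (hlam : π.coeff lam ≠ 0) (hlen : deg π ≤ lam.length) :
    ∃ x, (c * π).coeff (x * lam) ≠ 0 := by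
  obtain ⟨x, hx, hxlen⟩ := exists_length_eq_deg hc
  exact ⟨x, by
    rw [coeff_mul_mul_of_deg_le hxlen.ge hlen]
    exact mul_ne_zero (Finsupp.mem_support_iff.mp hx) hlam⟩

lemma exists_coeff_mul_ne_zero_of_deg_eq {ι : Type*} [Fintype ι] {r : ι → FreeStarAlg g}
    {p Q : FreeStarAlg g} {lam : Word g} {j : ι} (hlam : p.coeff lam ≠ 0)
    (hlen : lam.length = deg p) (hj : r j ≠ 0) (hmax : ∀ i, deg (r i) ≤ deg (r j))
    (hpQ : deg p ≤ deg Q) (hdeg : deg Q + deg p = deg (r j) + deg (r j))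
    (h : ∑ i, starP (r i) * r i = Q * p + starP p * starP Q) :
    ∃ x, (r j).coeff (x * lam) ≠ 0 := by
  have htop := homogeneousComponent_sum_starP_mul_self hmax
  rw [h, ← hdeg, homogeneousComponent_mul_add_starP le_rfl le_rfl] at htop
  obtain ⟨c, hc⟩ := mem_leftIdealGen_singleton.mp <| mem_leftIdealGen_of_sum_starP_mul_self_eq
    (fun i => isHom_homogeneousComponent _ (r i)) (isHom_homogeneousComponent _ p)
    (isHom_homogeneousComponent _ Q) (by omega) hdeg htop.symm j
  have hc0 : c ≠ 0 := by
    rintro rfl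
    exact homogeneousComponent_deg_ne_zero hj (by simpa using hc)
  have hπlam : (homogeneousComponent (deg p) p).coeff lam ≠ 0 := by
    rwa [coeff_homogeneousComponent, if_pos hlen]
  obtain ⟨x, hx⟩ := exists_coeff_mul_mul_ne_zero hc0 hπlam
    ((isHom_homogeneousComponent _ p).deg_le.trans hlen.ge)
  refine ⟨x, fun h0 => hx ?_⟩
  rw [← hc, coeff_homogeneousComponent, h0, ite_self]

lemma eq_zero_of_sum_starP_mul_self_eq {p : FreeStarAlg g} {lam : Word g}
    (hlam : p.coeff lam ≠ 0) (hlen : lam.length = deg p)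
    (hp : ∀ q, deg q < deg p → IsSOS (q * p + starP p * starP q) →
      q * p + starP p * starP q = 0)
    {k : ℕ} {r : Fin k → FreeStarAlg g} (hr : ∀ i, r i ∈ reduced lam)
    (Q : FreeStarAlg g) (hQ : ∑ i, starP (r i) * r i = Q * p + starP p * starP Q) :
    ∀ i, r i = 0 := by
  induction hn : deg Q using Nat.strong_induction_on generalizing Q with
  | _ n ih =>
  subst hn
  rw [← sum_starP_mul_self_eq_zero_iff]
  by_cases hQp : deg Q < deg p
  · exact hQ.trans (hp Q hQp ⟨k, r, hQ.symm⟩)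
  by_contra hσ
  obtain ⟨j, hj, hmax⟩ := exists_deg_le_of_ne_zero
    (not_forall.mp (mt sum_starP_mul_self_eq_zero_iff.mpr hσ))
  have hp0 : p ≠ 0 := by rintro rfl; simp at hlam
  rcases (hQ ▸ deg_mul_add_starP_le Q p).lt_or_eq with hlt | heq
  · obtain ⟨Q', hQ', hlt'⟩ :=
      exists_deg_lt_of_deg_mul_add_starP_lt hp0 (not_lt.mp hQp) (hQ ▸ hlt)
    exact hσ (sum_starP_mul_self_eq_zero_iff.mpr (ih _ hlt' Q' (hQ.trans hQ'.symm) rfl))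
  · rw [deg_sum_starP_mul_self hmax, two_mul] at heq
    obtain ⟨x, hx⟩ := exists_coeff_mul_ne_zero_of_deg_eq hlam hlen hj hmax (not_lt.mp hQp)
      heq.symm hQ
    exact hx (mem_supported'.mp (hr j) _ (by simp))

lemma isRealIdeal_leftIdealGen_singleton {p : FreeStarAlg g}
    (hp : ∀ q, deg q < deg p → IsSOS (q * p + starP p * starP q) →
      q * p + starP p * starP q = 0) :
    IsRealIdeal (leftIdealGen {p}) := by
  intro k a ha i
  by_cases hp0 : p = 0
  · subst hp0
    obtain ⟨u, hu, v, hv, huv⟩ := ha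
    obtain ⟨_, rfl⟩ := mem_leftIdealGen_singleton.mp hu
    obtain ⟨_, rfl⟩ := mem_leftIdealGen_singleton.mp hv
    simp only [mul_zero, starP_zero, add_zero, sum_starP_mul_self_eq_zero_iff] at huv
    simp [huv i]
  obtain ⟨lam, hlam, hlen⟩ := exists_length_eq_deg hp0
  choose c r hr hcr using fun i =>
    exists_eq_mul_add_mem_reduced (Finsupp.mem_support_iff.mp hlam) hlen.ge (a i)
  have hmem : MemIplusIstar (leftIdealGen {p}) (∑ i, starP (r i) * r i) :=
    memIplusIstar_sum_starP_mul_self_of_sub_mem (fun i => mem_leftIdealGen_singleton.mpr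
      ⟨c i, by rw [hcr i, add_sub_cancel_right]⟩) ha
  obtain ⟨u, hu, hσ⟩ := exists_eq_add_starP_of_memIplusIstar
    (by simp [starP_sum, starP_mul]) hmem
  obtain ⟨Q, rfl⟩ := mem_leftIdealGen_singleton.mp hu
  have hr0 := eq_zero_of_sum_starP_mul_self_eq (Finsupp.mem_support_iff.mp hlam) hlen hp hr Q
    (by rw [hσ, starP_mul])
  rw [hcr i, hr0 i, add_zero]
  exact mem_leftIdealGen_singleton.mpr ⟨c i, rfl⟩

end FreeStarAlg

open FreeStarAlg

/-- The left ideal generated by a single polynomial `p` is real iff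
there is no `q` with `deg q < deg p` such that `q p + p* q*` is a nonzero sum of
squares. -/
theorem stmt7 {g : ℕ} (p : FreeStarAlg g) :
    IsRealIdeal (leftIdealGen {p}) ↔
      ¬ ∃ q : FreeStarAlg g, deg q < deg p ∧
        IsSOS (q * p + starP p * starP q) ∧ q * p + starP p * starP q ≠ 0 := by
  refine ⟨fun hI ⟨q, hq, hsos, hne⟩ => hne (mul_add_starP_eq_zero_of_isRealIdeal hI hq hsos),
    fun h => isRealIdeal_leftIdealGen_singleton fun q hq hsos =>
      Classical.byContradiction fun hne => h ⟨q, hq, hsos, hne⟩⟩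
end
end

section
/- Let x = (x_1, x_2). Then the polynomial x_1 x_2* x_2 x_1 belongs to the vanishing radical of the left ideal of R<x,x*> generated by {x_1 (x_2* x_2)^d x_1 : d >= 2}: that is, for every n, every pair of real n x n matrices X_1, X_2 and vector v with X_1 (X_2^T X_2)^d X_1 v = 0 for all d >= 2, one has X_1 X_2^T X_2 X_1 v = 0. -/
open scoped BigOperators

noncomputable section

open FreeStarAlg Matrix

/-- For real `n × n` matrices `X₁, X₂` and a vector `v`, if
`X₁ (X₂ᵀ X₂)^d X₁ v = 0` for all `d ≥ 2`, then `X₁ X₂ᵀ X₂ X₁ v = 0`. -/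
theorem stmt18 (n : ℕ) (X1 X2 : Matrix (Fin n) (Fin n) ℝ) (v : Fin n → ℝ)
    (h : ∀ d : ℕ, 2 ≤ d → (X1 * (X2ᵀ * X2) ^ d * X1).mulVec v = 0) :
    (X1 * X2ᵀ * X2 * X1).mulVec v = 0 := by
  set A := X2ᵀ * X2 with hA
  have hAsymm : Aᵀ = A := by simp [hA, Matrix.transpose_mul]
  set a : (Fin n → ℝ) →ₗ[ℝ] (Fin n → ℝ) := Matrix.mulVecLin A with ha
  set f : (Fin n → ℝ) →ₗ[ℝ] (Fin n → ℝ) := Matrix.mulVecLin X1 with hf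
  set w : Fin n → ℝ := X1.mulVec v with hw
  have hpow : ∀ d : ℕ, Matrix.mulVecLin (A ^ d) = a ^ d := by
    intro d
    induction d with
    | zero => simp [Matrix.mulVecLin_one]; rfl
    | succ d ih => rw [pow_succ, Matrix.mulVecLin_mul, ih, pow_succ]; rfl
  have hd : ∀ d : ℕ, 2 ≤ d → f ((a ^ d) w) = 0 := by
    intro d hd2
    have := h d hd2
    rw [← Matrix.mulVec_mulVec, ← Matrix.mulVec_mulVec] at this
    rw [← this]
    rw [← hpow d]; rfl
  -- key: a (a x) = 0 → a x = 0
  have hker : ∀ x : Fin n → ℝ, a (a x) = 0 → a x = 0 := by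
    intro x hx
    have h1 : A.mulVec x ⬝ᵥ A.mulVec x = 0 := by
      have : A.mulVec x ⬝ᵥ A.mulVec x = x ⬝ᵥ Aᵀ.mulVec (A.mulVec x) := by
        rw [Matrix.dotProduct_mulVec, Matrix.mulVec_transpose]
        rw [dotProduct_comm]
      rw [this, hAsymm]
      have : A.mulVec (A.mulVec x) = 0 := hx
      rw [this, dotProduct_zero]
    have := dotProduct_self_eq_zero.mp h1
    exact this
  set V := Submodule.span ℝ (Set.range fun d : ℕ => (a ^ (d + 1)) w) with hV
  set U := Submodule.span ℝ (Set.range fun d : ℕ => (a ^ (d + 2)) w) with hU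
  have hUV : U ≤ V := by
    rw [hU, Submodule.span_le]
    rintro _ ⟨d, rfl⟩
    exact Submodule.subset_span ⟨d + 1, rfl⟩
  have hVrange : ∀ x ∈ V, ∃ y, a y = x := by
    intro x hx
    have : V ≤ LinearMap.range a := by
      rw [hV, Submodule.span_le]
      rintro _ ⟨d, rfl⟩
      exact ⟨(a ^ d) w, by rw [← Module.End.mul_apply, ← pow_succ']⟩
    exact this hx
  have hinjV : ∀ x ∈ V, a x = 0 → x = 0 := by
    intro x hx h0
    obtain ⟨y, rfl⟩ := hVrange x hx
    exact hker y h0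
  have hmapV : V.map a ≤ U := by
    rw [hV, Submodule.map_span, Submodule.span_le]
    rintro _ ⟨_, ⟨d, rfl⟩, rfl⟩
    refine Submodule.subset_span ⟨d, ?_⟩
    rw [← Module.End.mul_apply, ← pow_succ']
  have hfinrank : Module.finrank ℝ (V.map a) = Module.finrank ℝ V := by
    let r : V →ₗ[ℝ] (Fin n → ℝ) := a ∘ₗ V.subtype
    have hrker : LinearMap.ker r = ⊥ := by
      rw [LinearMap.ker_eq_bot']
      rintro ⟨x, hx⟩ hrx
      have : a x = 0 := hrx
      exact Subtype.ext (hinjV x hx this)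
    have hrrange : LinearMap.range r = V.map a := by
      rw [LinearMap.range_comp, Submodule.range_subtype]
    have := LinearMap.finrank_range_add_finrank_ker r
    rw [hrker, hrrange] at this
    simpa using this
  have hUVeq : U = V := by
    refine Submodule.eq_of_le_of_finrank_eq hUV ?_
    have h1 : Module.finrank ℝ U ≤ Module.finrank ℝ V := Submodule.finrank_mono hUV
    have h2 : Module.finrank ℝ V ≤ Module.finrank ℝ U := by
      rw [← hfinrank]
      exact Submodule.finrank_mono hmapV
    omega
  have haw : a w ∈ U := by
    rw [hUVeq]
    exact Submodule.subset_span ⟨0, by simp⟩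
  have hUker : U ≤ LinearMap.ker f := by
    rw [hU, Submodule.span_le]
    rintro _ ⟨d, rfl⟩
    exact hd (d + 2) (by omega)
  have : f (a w) = 0 := hUker haw
  have goal_eq : X1 * X2ᵀ * X2 * X1 = X1 * A * X1 := by
    rw [hA, Matrix.mul_assoc X1 X2ᵀ X2]
  rw [goal_eq, ← Matrix.mulVec_mulVec, ← Matrix.mulVec_mulVec]
  simpa [hf, ha, hw] using this
end
end
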